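/- arXiv:1307.7070 — 4 statements merged into one kernel-verified Lean document; each statement's English description precedes it below -/
import Mathlib

section
/- For every ν ∈ ℝ and every fixed t ≥ 0, the random variable A^{(ν)}_t = ∫_0^t exp(2 B^{(ν)}_u) du has the same distribution as exp(2 B^{(ν)}_t) · ∫_0^t exp(−2 B^{(ν)}_s) ds (i.e., Yor's process at time t equals in distribution the geometric Brownian motion with affine drift X^{(ν)}_t started at X_0 = 0). -/
open MeasureTheory ProbabilityTheory Real Filter Set
open scoped ENNReal NNReal

/-- A standard one-dimensional Brownian motion on `(Ω, ℱ, P)`: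
measurable coordinates, starts at `0`, continuous paths, Gaussian
increments with variance `t - s`, and independent increments. -/
structure IsStandardBrownianMotion {Ω : Type*} [MeasurableSpace Ω]
    (P : Measure Ω) (B : ℝ → Ω → ℝ) : Prop where
  measurable : ∀ t : ℝ, Measurable (B t)
  init : ∀ᵐ ω ∂P, B 0 ω = 0
  cont : ∀ᵐ ω ∂P, Continuous fun t => B t ω
  gauss_incr : ∀ s t : ℝ, 0 ≤ s → s ≤ t →
    P.map (fun ω => B t ω - B s ω) = gaussianReal 0 (Real.toNNReal (t - s))
  indep_incr : ∀ t : ℕ → ℝ, Monotone t →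
    iIndepFun (fun i ω => B (t (i + 1)) ω - B (t i) ω) P

/-- First hitting time of level `x` by the path `t ↦ f t ω`, valued in `ℝ≥0∞`
(`∞` if the level is never attained). -/
noncomputable def hitTime {Ω : Type*} (f : ℝ → Ω → ℝ) (x : ℝ) (ω : Ω) : ℝ≥0∞ :=
  ⨅ (t : ℝ) (_ : 0 ≤ t ∧ f t ω = x), ENNReal.ofReal t

/-- Yor's process `A^{(ν)}_t = ∫_0^t exp(2 B^{(ν)}_u) du` with `B^{(ν)}_u = B_u + ν u`. -/
noncomputable def yorA {Ω : Type*} (B : ℝ → Ω → ℝ) (ν : ℝ) (t : ℝ) (ω : Ω) : ℝ :=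
  ∫ u in (0:ℝ)..t, Real.exp (2 * (B u ω + ν * u))

/-- Geometric Brownian motion with affine drift
`Y^{(ν)}_t = exp(2 B^{(ν)}_t) (y − ∫_0^t exp(−2 B^{(ν)}_s) ds)`, started at `y`. -/
noncomputable def procY {Ω : Type*} (B : ℝ → Ω → ℝ) (ν y : ℝ) (t : ℝ) (ω : Ω) : ℝ :=
  Real.exp (2 * (B t ω + ν * t)) *
    (y - ∫ s in (0:ℝ)..t, Real.exp (-(2 * (B s ω + ν * s))))

/-- `Y^{(μ,σ)}` started at `x`: solution of `dY = (μ Y − 1) dt + σ Y dB`. -/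
noncomputable def procYgen {Ω : Type*} (B : ℝ → Ω → ℝ) (μ σ x : ℝ) (t : ℝ) (ω : Ω) : ℝ :=
  Real.exp ((μ - σ ^ 2 / 2) * t + σ * B t ω) *
    (x - ∫ u in (0:ℝ)..t, Real.exp (-((μ - σ ^ 2 / 2) * u + σ * B u ω)))

/-- `X^{(μ,σ)}` started at `x`: solution of `dX = (μ X + 1) dt + σ X dB`. -/
noncomputable def procXgen {Ω : Type*} (B : ℝ → Ω → ℝ) (μ σ x : ℝ) (t : ℝ) (ω : Ω) : ℝ :=
  Real.exp ((μ - σ ^ 2 / 2) * t + σ * B t ω) *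
    (x + ∫ u in (0:ℝ)..t, Real.exp (-((μ - σ ^ 2 / 2) * u + σ * B u ω)))

/-- Kummer's confluent hypergeometric function of the first kind. -/
noncomputable def kummerM (a b z : ℝ) : ℝ :=
  ∑' n : ℕ, ((ascPochhammer ℝ n).eval a / (ascPochhammer ℝ n).eval b) * z ^ n / n.factorial

/-- Kummer's function of the second kind (integral representation, valid for `a, z > 0`). -/
noncomputable def kummerU (a b z : ℝ) : ℝ :=
  (1 / Real.Gamma a) *
    ∫ t in Set.Ioi (0:ℝ), Real.exp (-z * t) * t ^ (a - 1) * (1 + t) ^ (b - a - 1)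

/-- Modified Bessel function of the first kind. -/
noncomputable def besselI (ν z : ℝ) : ℝ :=
  ∑' n : ℕ, (z / 2) ^ (2 * (n : ℝ) + ν) / (n.factorial * Real.Gamma ((n : ℝ) + ν + 1))

/-- Lower incomplete gamma function `γ(ν, x) = ∫_0^x t^{ν−1} e^{−t} dt`. -/
noncomputable def lowerGamma (ν x : ℝ) : ℝ :=
  ∫ t in (0:ℝ)..x, t ^ (ν - 1) * Real.exp (-t)

/-- Exponential integral `E₁(z) = ∫_z^∞ e^{−t}/t dt`. -/
noncomputable def expE1 (z : ℝ) : ℝ :=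
  ∫ t in Set.Ioi z, Real.exp (-t) / t

/-- GMWB policyholder's fund value:
`F_t = e^{(r−m−σ²/2)t + σ B_t}(G − w ∫_0^t e^{−(r−m−σ²/2)u − σ B_u} du)`. -/
noncomputable def fundF {Ω : Type*} (B : ℝ → Ω → ℝ) (r m σ G w : ℝ) (t : ℝ) (ω : Ω) : ℝ :=
  Real.exp ((r - m - σ ^ 2 / 2) * t + σ * B t ω) *
    (G - w * ∫ u in (0:ℝ)..t, Real.exp (-((r - m - σ ^ 2 / 2) * u + σ * B u ω)))

/-! For fixed `t`, the path `s ↦ B_t - B_{t-s}` on `[0, t]` is again a Brownian motion, and the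
substitution `s = t - u` turns `∫_0^t exp(2 (B_t - B_{t-u} + ν u)) du` into
`exp(2 B^{(ν)}_t) ∫_0^t exp(-2 B^{(ν)}_s) ds`. To avoid laws on path space we compare left Riemann
sums on the uniform grid: the increments of `B` along the grid are i.i.d. Gaussian, so their law
is invariant under reversing their order, and the grid values of `B` and of the reversed path are
their partial sums in the two orders. Hence the Riemann sums have the same law for every `n`, and
they converge pathwise to the two sides. -/

open scoped Topology

section RiemannSum

variable {g : ℝ → ℝ}

lemma abs_sub_intervalIntegral_le_of_forall_abs_sub_le {a b ε : ℝ}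
    (hg : IntervalIntegrable g volume a b) (hab : a ≤ b) (h : ∀ u ∈ Icc a b, |g u - g a| ≤ ε) :
    |(b - a) * g a - ∫ u in a..b, g u| ≤ ε * (b - a) := by
  have hbound : ∀ u ∈ uIoc a b, ‖g a - g u‖ ≤ ε := by
    rw [uIoc_of_le hab]
    intro u hu
    rw [Real.norm_eq_abs, abs_sub_comm]
    exact h u (Ioc_subset_Icc_self hu)
  have := intervalIntegral.norm_integral_le_of_norm_le_const hbound
  rwa [intervalIntegral.integral_sub intervalIntegrable_const hg,
    intervalIntegral.integral_const, smul_eq_mul, abs_of_nonneg (sub_nonneg.2 hab)] at this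

lemma abs_sum_mul_sub_intervalIntegral_le (hg : Continuous g) {s : ℕ → ℝ} (hs : Monotone s)
    {n : ℕ} {ε : ℝ} (h : ∀ k < n, ∀ u ∈ Icc (s k) (s (k + 1)), |g u - g (s k)| ≤ ε) :
    |∑ k ∈ Finset.range n, (s (k + 1) - s k) * g (s k) - ∫ u in s 0..s n, g u|
      ≤ ε * (s n - s 0) := by
  rw [← intervalIntegral.sum_integral_adjacent_intervals fun k _ => hg.intervalIntegrable _ _,
    ← Finset.sum_sub_distrib, ← Finset.sum_range_sub, Finset.mul_sum]
  refine (Finset.abs_sum_le_sum_abs _ _).trans (Finset.sum_le_sum fun k hk => ?_)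
  exact abs_sub_intervalIntegral_le_of_forall_abs_sub_le (hg.intervalIntegrable _ _) (hs k.le_succ)
    (h k (Finset.mem_range.1 hk))

theorem tendsto_riemannSum_intervalIntegral (hg : Continuous g) {t : ℝ} (ht : 0 ≤ t) :
    Tendsto (fun n : ℕ => t / n * ∑ k ∈ Finset.range n, g (t * k / n)) atTop
      (𝓝 (∫ u in (0:ℝ)..t, g u)) := by
  rw [Metric.tendsto_nhds]
  intro ε hε
  obtain ⟨δ, hδ, hg_unif⟩ := Metric.uniformContinuousOn_iff_le.1
    (isCompact_Icc.uniformContinuousOn_of_continuous (hg.continuousOn (s := Icc 0 t)))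
    (ε / (2 * (t + 1))) (by positivity)
  filter_upwards [eventually_ge_atTop 1,
    (tendsto_const_div_atTop_nhds_zero_nat t).eventually (gt_mem_nhds hδ)] with n hn hmesh
  set s : ℕ → ℝ := fun k => t * k / n
  have hs : Monotone s := fun j k hjk => by simp only [s]; gcongr
  have hstep : ∀ k, s (k + 1) - s k = t / n := fun k => by simp only [s]; push_cast; ring
  have hs0 : s 0 = 0 := by simp [s]
  have hsn : s n = t := by simp only [s]; field_simp
  have hs_mem : ∀ k ≤ n, s k ∈ Icc 0 t := fun k hk => ⟨by positivity, by
    simp only [s]; rw [div_le_iff₀ (by positivity)]; gcongr⟩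
  have hclose : ∀ k < n, ∀ u ∈ Icc (s k) (s (k + 1)), |g u - g (s k)| ≤ ε / (2 * (t + 1)) := by
    intro k hk u hu
    have hu_mem : u ∈ Icc 0 t := ⟨(hs_mem k hk.le).1.trans hu.1, hu.2.trans (hs_mem _ hk).2⟩
    refine hg_unif u hu_mem (s k) (hs_mem k hk.le) ?_
    rw [Real.dist_eq, abs_of_nonneg (sub_nonneg.2 hu.1)]
    linarith [hu.2, hstep k]
  have hsum : t / n * ∑ k ∈ Finset.range n, g (t * k / n)
      = ∑ k ∈ Finset.range n, (s (k + 1) - s k) * g (s k) := by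
    simp only [hstep, Finset.mul_sum, s]
  rw [Real.dist_eq, hsum, ← hs0, ← hsn]
  calc _ ≤ ε / (2 * (t + 1)) * (s n - s 0) := abs_sum_mul_sub_intervalIntegral_le hg hs hclose
    _ < ε := by
      rw [hs0, hsn, sub_zero, div_mul_eq_mul_div, div_lt_iff₀ (by positivity)]
      nlinarith

end RiemannSum

theorem MeasureTheory.map_eq_map_of_ae_tendsto {Ω E ι : Type*} [MeasurableSpace Ω] {P : Measure Ω}
    [IsProbabilityMeasure P] [PseudoEMetricSpace E] [MeasurableSpace E] [BorelSpace E]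
    {l : Filter ι} [l.NeBot] [l.IsCountablyGenerated] {X Y : ι → Ω → E} {X' Y' : Ω → E}
    (hX : ∀ i, AEMeasurable (X i) P) (hY : ∀ i, AEMeasurable (Y i) P)
    (hX' : ∀ᵐ ω ∂P, Tendsto (fun i => X i ω) l (𝓝 (X' ω)))
    (hY' : ∀ᵐ ω ∂P, Tendsto (fun i => Y i ω) l (𝓝 (Y' ω)))
    (hXY : ∀ i, P.map (X i) = P.map (Y i)) : P.map X' = P.map Y' := by
  have hY'_dist := tendstoInDistribution_of_ae_tendsto hY
    (aemeasurable_of_tendsto_metrizable_ae l hY hY') hY'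
  refine tendstoInDistribution_unique X (tendstoInDistribution_of_ae_tendsto hX
    (aemeasurable_of_tendsto_metrizable_ae l hX hX') hX') ⟨hX, hY'_dist.aemeasurable_limit, ?_⟩
  simpa only [hXY] using hY'_dist.tendsto

theorem MeasureTheory.Measure.pi_map_comp_equiv {ι α : Type*} [Fintype ι] [MeasurableSpace α]
    (μ : Measure α) [SigmaFinite μ] (σ : ι ≃ ι) :
    (Measure.pi fun _ : ι => μ).map (fun x => x ∘ σ) = Measure.pi fun _ => μ := by
  convert Measure.pi_map_piCongrLeft σ.symm fun _ : ι => μ with x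
  ext i
  simpa using (MeasurableEquiv.piCongrLeft_apply_apply σ.symm (β := fun _ => α) x (σ i)).symm

theorem Fin.continuous_partialSum {M : Type*} [AddMonoid M] [TopologicalSpace M]
    [ContinuousAdd M] {n : ℕ} : Continuous (Fin.partialSum : (Fin n → M) → Fin (n + 1) → M) := by
  refine continuous_pi fun k => Fin.inductionOn k (by simp [continuous_const]) fun k hk => ?_
  simp only [Fin.partialSum_succ]
  exact hk.add (continuous_apply k)

theorem integral_exp_sub_comp_sub (b : ℝ → ℝ) (t : ℝ) :
    ∫ u in (0:ℝ)..t, exp (2 * (b t - b (t - u))) =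
      exp (2 * b t) * ∫ s in (0:ℝ)..t, exp (-(2 * b s)) := by
  rw [intervalIntegral.integral_comp_sub_left (fun s => exp (2 * (b t - b s))), sub_self,
    sub_zero, ← intervalIntegral.integral_const_mul]
  congr with s
  rw [← exp_add]
  ring_nf

namespace IsStandardBrownianMotion

variable {Ω : Type*} [MeasurableSpace Ω] {P : Measure Ω} {B : ℝ → Ω → ℝ}

theorem map_increments_eq_pi (hB : IsStandardBrownianMotion P B) {τ : ℕ → ℝ} (hτ : Monotone τ)
    (hτ0 : 0 ≤ τ 0) (n : ℕ) :
    P.map (fun ω (i : Fin n) => B (τ (i + 1)) ω - B (τ i) ω) =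
      Measure.pi fun i : Fin n => gaussianReal 0 (τ (i + 1) - τ i).toNNReal := by
  have h := ((hB.indep_incr τ hτ).precomp Fin.val_injective).map_fun_eq_pi_map
    fun i : Fin n => ((hB.measurable _).sub (hB.measurable _)).aemeasurable
  simp only [Pi.sub_apply] at h
  rw [h]
  congr with i : 1
  exact hB.gauss_incr _ _ (hτ0.trans (hτ (Nat.zero_le _))) (hτ (Nat.le_succ _))

theorem map_grid_eq_map_timeReversal (hB : IsStandardBrownianMotion P B) {t : ℝ} (ht : 0 ≤ t)
    (n : ℕ) :
    P.map (fun ω (k : Fin (n + 1)) => B (t * (k : ℕ) / n) ω) =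
      P.map (fun ω (k : Fin (n + 1)) => B t ω - B (t - t * (k : ℕ) / n) ω) := by
  set V : Ω → Fin n → ℝ := fun ω i => B (t * ((i : ℕ) + 1 : ℕ) / n) ω - B (t * (i : ℕ) / n) ω
  have hV : Measurable V := measurable_pi_lambda _ fun i => (hB.measurable _).sub (hB.measurable _)
  have hS : Measurable (Fin.partialSum : (Fin n → ℝ) → Fin (n + 1) → ℝ) :=
    Fin.continuous_partialSum.measurable
  have hV_law : P.map V = P.map fun ω => V ω ∘ Fin.revPerm := by
    have h := hB.map_increments_eq_pi (τ := fun j => t * j / n)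
      (fun j k hjk => by dsimp only; gcongr) (by simp) n
    have hstep : ∀ i : ℕ, t * (i + 1 : ℕ) / n - t * i / n = t / n := fun i => by push_cast; ring
    simp only [hstep] at h
    change P.map V = _ at h
    rw [show (fun ω => V ω ∘ Fin.revPerm) = (· ∘ Fin.revPerm) ∘ V from rfl,
      ← Measure.map_map (by fun_prop) hV, h, Measure.pi_map_comp_equiv]
  -- Both grid vectors are partial sums of the increment vector `V`, read forwards and backwards.
  have hfwd : (fun ω (k : Fin (n + 1)) => B (t * (k : ℕ) / n) ω) =ᵐ[P]
      fun ω => Fin.partialSum (V ω) := by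
    filter_upwards [hB.init] with ω h0
    have h := Fin.partialSum_left_neg fun k : Fin (n + 1) => B (t * (k : ℕ) / n) ω
    simp only [Fin.val_zero, CharP.cast_eq_zero, mul_zero, zero_div, h0, zero_vadd,
      Fin.val_castSucc, Fin.val_succ, neg_add_eq_sub] at h
    exact h.symm
  have hrev : (fun ω (k : Fin (n + 1)) => B t ω - B (t - t * (k : ℕ) / n) ω) =
      fun ω => Fin.partialSum (V ω ∘ Fin.revPerm) := by
    funext ω
    have h := Fin.partialSum_left_neg fun k : Fin (n + 1) => B t ω - B (t - t * (k : ℕ) / n) ω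
    simp only [Fin.val_zero, CharP.cast_eq_zero, mul_zero, zero_div, sub_zero, sub_self,
      zero_vadd, Fin.val_castSucc, Fin.val_succ] at h
    rw [← h]
    congr with i
    have hn : (n : ℝ) ≠ 0 := Nat.cast_ne_zero.2 (Fin.pos i).ne'
    have hi : (i : ℕ) + 1 ≤ n := i.isLt
    have hrev_succ : t * ((n - (i + 1) + 1 : ℕ) : ℝ) / n = t - t * (i : ℕ) / n := by
      rw [Nat.cast_add, Nat.cast_sub hi]; field_simp; push_cast; ring
    have hrev : t * ((n - (i + 1) : ℕ) : ℝ) / n = t - t * ((i : ℕ) + 1 : ℕ) / n := by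
      rw [Nat.cast_sub hi]; field_simp
    simp only [V, Function.comp_apply, Fin.revPerm_apply, Fin.val_rev, hrev_succ, hrev]
    ring
  calc P.map (fun ω (k : Fin (n + 1)) => B (t * (k : ℕ) / n) ω)
      = (P.map V).map Fin.partialSum := by rw [Measure.map_congr hfwd, Measure.map_map hS hV]; rfl
    _ = _ := by rw [hV_law, Measure.map_map hS (by fun_prop), hrev]; rfl

theorem map_riemannSum_eq_map_timeReversal (hB : IsStandardBrownianMotion P B) (ν : ℝ) {t : ℝ}
    (ht : 0 ≤ t) (n : ℕ) :
    P.map (fun ω => t / n * ∑ k ∈ Finset.range n,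
        exp (2 * (B (t * k / n) ω + ν * (t * k / n)))) =
      P.map (fun ω => t / n * ∑ k ∈ Finset.range n,
        exp (2 * ((B t ω + ν * t) - (B (t - t * k / n) ω + ν * (t - t * k / n))))) := by
  set Φ : (Fin (n + 1) → ℝ) → ℝ :=
    fun y => t / n * ∑ k : Fin n, exp (2 * (y k.castSucc + ν * (t * (k : ℕ) / n)))
  have hΦ : Measurable Φ := by fun_prop
  have hBm := hB.measurable
  have hfwd : (fun ω => t / n * ∑ k ∈ Finset.range n,
        exp (2 * (B (t * k / n) ω + ν * (t * k / n)))) =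
      Φ ∘ fun ω (k : Fin (n + 1)) => B (t * (k : ℕ) / n) ω := by
    funext ω
    simp only [Φ, Function.comp_apply, Fin.val_castSucc]
    rw [Fin.sum_univ_eq_sum_range (fun k : ℕ => exp (2 * (B (t * k / n) ω + ν * (t * k / n))))]
  have hrev : (fun ω => t / n * ∑ k ∈ Finset.range n,
        exp (2 * ((B t ω + ν * t) - (B (t - t * k / n) ω + ν * (t - t * k / n))))) =
      Φ ∘ fun ω (k : Fin (n + 1)) => B t ω - B (t - t * (k : ℕ) / n) ω := by
    funext ω
    simp only [Φ, Function.comp_apply, Fin.val_castSucc]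
    rw [Fin.sum_univ_eq_sum_range
      (fun k : ℕ => exp (2 * (B t ω - B (t - t * k / n) ω + ν * (t * k / n))))]
    ring_nf
  rw [hfwd, hrev, ← Measure.map_map hΦ (by fun_prop), ← Measure.map_map hΦ (by fun_prop),
    hB.map_grid_eq_map_timeReversal ht]

end IsStandardBrownianMotion

/-- For every `ν ∈ ℝ` and `t ≥ 0`, Yor's process
`A^{(ν)}_t = ∫_0^t exp(2 B^{(ν)}_u) du` has the same distribution as
`exp(2 B^{(ν)}_t) ∫_0^t exp(−2 B^{(ν)}_s) ds` (i.e. `X^{(ν)}_t` started at `0`). -/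
theorem yorA_eqDist_gbmAffine
    {Ω : Type*} [MeasurableSpace Ω] (P : Measure Ω) [IsProbabilityMeasure P]
    (B : ℝ → Ω → ℝ) (hB : IsStandardBrownianMotion P B) (ν t : ℝ) (ht : 0 ≤ t) :
    P.map (fun ω => ∫ u in (0:ℝ)..t, Real.exp (2 * (B u ω + ν * u))) =
      P.map (fun ω => Real.exp (2 * (B t ω + ν * t)) *
        ∫ s in (0:ℝ)..t, Real.exp (-(2 * (B s ω + ν * s)))) := by
  have hBm := hB.measurable
  refine map_eq_map_of_ae_tendsto (l := atTop) (fun n => by fun_prop) (fun n => by fun_prop)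
    ?_ ?_ (hB.map_riemannSum_eq_map_timeReversal ν ht)
  · filter_upwards [hB.cont] with ω hω
    exact tendsto_riemannSum_intervalIntegral (by fun_prop) ht
  · filter_upwards [hB.cont] with ω hω
    rw [← integral_exp_sub_comp_sub (fun u => B u ω + ν * u)]
    exact tendsto_riemannSum_intervalIntegral (by fun_prop) ht
end

section
/- For every ν ∈ ℝ and every x > 0, the hitting times τ^{(−ν)}_{x,0} and H^{(ν)}_x have the same distribution; equivalently, inf{t ≥ 0 : ∫_0^t exp(−2 B_s + 2νs) ds = x} has the same law as inf{t ≥ 0 : ∫_0^t exp(2 B_s + 2νs) ds = x}. -/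
open MeasureTheory ProbabilityTheory Real Filter Set
open scoped ENNReal NNReal

/-!
Reflection `B ↦ -B` preserves the law of Brownian motion and turns the additive functional
`∫_0^t exp(2 B_u + 2νu) du` into `∫_0^t exp(-2 B_u + 2νu) du`. The hitting time of a level by
such a functional of a continuous path is a measurable function of the path sampled at
nonnegative times (the integrals are limits of Riemann sums, and the infimum may be taken over
rational times), so the two hitting times have the same law.
-/

open scoped Topology

namespace IsStandardBrownianMotion

variable {Ω : Type*} [MeasurableSpace Ω] {P : Measure Ω} {B : ℝ → Ω → ℝ}

theorem isPreBrownianReal (hB : IsStandardBrownianMotion P B) :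
    IsPreBrownianReal (fun t : ℝ≥0 => B t) P := by
  refine HasIndepIncrements.isPreBrownianReal_of_hasLaw
    (fun t => ⟨(hB.measurable t).aemeasurable, ?_⟩)
    (hasIndepIncrements_iff_nat.2 fun t ht => hB.indep_incr _ (NNReal.coe_mono.comp ht))
  have hB0 : (fun ω => B t ω - B 0 ω) =ᵐ[P] B t := by
    filter_upwards [hB.init] with ω hω
    rw [hω, sub_zero]
  rw [← Measure.map_congr hB0, hB.gauss_incr 0 t le_rfl t.2, sub_zero, Real.toNNReal_coe]

end IsStandardBrownianMotion

theorem ProbabilityTheory.IsPreBrownianReal.map_neg {Ω : Type*} [MeasurableSpace Ω] {P : Measure Ω}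
    [IsFiniteMeasure P] {B : ℝ≥0 → Ω → ℝ} (hB : IsPreBrownianReal B P)
    (hm : AEMeasurable (fun ω => (B · ω)) P) :
    P.map (fun ω => (-B · ω)) = P.map (fun ω => (B · ω)) := by
  refine (map_eq_iff_forall_finset_map_restrict_eq (X := -B) (Y := B)
    (measurable_neg.comp_aemeasurable hm) hm).2 fun I => ?_
  rw [(hB.neg.hasLaw I).map_eq, (hB.hasLaw I).map_eq]

section RiemannSum

variable {E : Type*} [NormedAddCommGroup E] [NormedSpace ℝ E] [CompleteSpace E]

theorem norm_smul_sub_integral_le {h : ℝ → E} {a b C : ℝ} (hab : a ≤ b)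
    (hh : IntervalIntegrable h volume a b) (hC : ∀ u ∈ Ioc a b, ‖h a - h u‖ ≤ C) :
    ‖(b - a) • h a - ∫ u in a..b, h u‖ ≤ C * (b - a) := by
  have hsub : (b - a) • h a - ∫ u in a..b, h u = ∫ u in a..b, (h a - h u) := by
    rw [intervalIntegral.integral_sub intervalIntegrable_const hh, intervalIntegral.integral_const]
  rw [hsub, ← abs_of_nonneg (sub_nonneg.2 hab)]
  exact intervalIntegral.norm_integral_le_of_norm_le_const fun u hu => hC u (uIoc_of_le hab ▸ hu)

theorem tendsto_riemannSum_integral {h : ℝ → E} (hh : Continuous h) {q : ℝ} (hq : 0 ≤ q) :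
    Tendsto (fun n : ℕ => ∑ k ∈ Finset.range n, (q / n) • h (k * q / n)) atTop
      (𝓝 (∫ u in (0:ℝ)..q, h u)) := by
  rw [Metric.tendsto_nhds]
  intro ε hε
  have huc : UniformContinuousOn h (Icc 0 q) :=
    isCompact_Icc.uniformContinuousOn_of_continuous hh.continuousOn
  obtain ⟨δ, hδ, hδh⟩ := Metric.uniformContinuousOn_iff.1 huc (ε / (q + 1)) (by positivity)
  filter_upwards [eventually_gt_atTop 0,
    (tendsto_const_div_atTop_nhds_zero_nat q).eventually (gt_mem_nhds hδ)] with n hn hmesh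
  set a : ℕ → ℝ := fun k => k * q / n with ha
  have hmesh_nonneg : 0 ≤ q / n := by positivity
  have hstep (k : ℕ) : a (k + 1) - a k = q / n := by simp only [ha]; push_cast; ring
  have ha_mem {k : ℕ} (hk : k ≤ n) : a k ∈ Icc 0 q := by
    refine ⟨by positivity, div_le_of_le_mul₀ n.cast_nonneg hq ?_⟩
    rw [mul_comm q]
    exact mul_le_mul_of_nonneg_right (by exact_mod_cast hk) hq
  have hsplit : ∫ u in (0:ℝ)..q, h u = ∑ k ∈ Finset.range n, ∫ u in a k..a (k + 1), h u := by
    rw [intervalIntegral.sum_integral_adjacent_intervals fun k _ => hh.intervalIntegrable _ _]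
    simp [ha, (Nat.cast_pos.2 hn).ne']
  have hpiece (k : ℕ) (hk : k ∈ Finset.range n) :
      ‖(q / n) • h (a k) - ∫ u in a k..a (k + 1), h u‖ ≤ ε / (q + 1) * (q / n) := by
    have hk := Finset.mem_range.1 hk
    rw [← hstep k]
    refine norm_smul_sub_integral_le (by linarith [hstep k]) (hh.intervalIntegrable _ _)
      fun u hu => ?_
    have hu_mem : u ∈ Icc 0 q := ⟨(ha_mem hk.le).1.trans hu.1.le, hu.2.trans (ha_mem hk).2⟩
    rw [← dist_eq_norm]
    refine (hδh _ (ha_mem hk.le) u hu_mem ?_).le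
    rw [Real.dist_eq, abs_sub_comm, abs_of_nonneg (by linarith [hu.1])]
    linarith [hu.2, hstep k]
  rw [dist_eq_norm, hsplit, ← Finset.sum_sub_distrib]
  calc _ ≤ ∑ k ∈ Finset.range n, ε / (q + 1) * (q / n) :=
        (norm_sum_le _ _).trans (Finset.sum_le_sum hpiece)
    _ = ε * (q / (q + 1)) := by
        rw [Finset.sum_const, Finset.card_range, nsmul_eq_mul]
        field_simp
    _ < ε := mul_lt_of_lt_one_right hε ((div_lt_one (by linarith)).2 (by linarith))

end RiemannSum

theorem hitTime_eq_iInf_nnrat {Ω : Type*} {f : ℝ → Ω → ℝ} {x : ℝ} {ω : Ω}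
    (hc : Continuous (f · ω)) (hm : Monotone (f · ω)) (h0 : f 0 ω ≤ x) :
    hitTime f x ω = ⨅ (q : ℚ≥0) (_ : x ≤ f q ω), ENNReal.ofReal q := by
  have hsuper : hitTime f x ω = ⨅ (t : ℝ) (_ : 0 ≤ t ∧ x ≤ f t ω), ENNReal.ofReal t := by
    refine le_antisymm (le_iInf₂ fun t ht => ?_) (le_iInf₂ fun t ht => iInf₂_le t ⟨ht.1, ht.2.ge⟩)
    obtain ⟨u, hu, hux⟩ := intermediate_value_Icc ht.1 hc.continuousOn ⟨h0, ht.2⟩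
    exact (iInf₂_le u ⟨hu.1, hux⟩).trans (ENNReal.ofReal_le_ofReal hu.2)
  rw [hsuper]
  refine le_antisymm (le_iInf₂ fun q hq => iInf₂_le (q : ℝ) ⟨q.cast_nonneg, hq⟩)
    (le_iInf₂ fun t ht => le_of_forall_gt fun c hc => ?_)
  obtain ⟨r, hr0, htr, hrc⟩ := ENNReal.lt_iff_exists_rat_btwn.1 hc
  have hr : ((r.toNNRat : ℚ≥0) : ℝ) = r := by rw [← Rat.cast_nnratCast, Rat.coe_toNNRat r hr0]
  rw [← ENNReal.ofReal_coe_nnreal, ENNReal.ofReal_lt_ofReal_iff',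
    Real.coe_toNNReal _ (Rat.cast_nonneg.2 hr0), ← hr] at htr
  refine lt_of_le_of_lt (iInf₂_le r.toNNRat (ht.2.trans (hm htr.1.le))) ?_
  rwa [hr]

theorem monotone_integral_of_nonneg {f : ℝ → ℝ} (hf : ∀ a b, IntervalIntegrable f volume a b)
    (hf0 : 0 ≤ f) (a : ℝ) : Monotone fun t => ∫ u in a..t, f u := fun s t hst => by
  rw [← sub_nonneg, intervalIntegral.integral_interval_sub_left (hf a t) (hf a s)]
  exact intervalIntegral.integral_nonneg hst fun u _ => hf0 u

section IntegralHitTime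

variable (φ : ℝ → ℝ → ℝ)

noncomputable def riemannSum (g : ℝ≥0 → ℝ) (q : ℝ≥0) (n : ℕ) : ℝ :=
  ∑ k ∈ Finset.range n, (q / n : ℝ) * φ (k * q / n) (g (k * q / n))

noncomputable def liminfRiemannSum (g : ℝ≥0 → ℝ) (q : ℝ≥0) : ℝ≥0∞ :=
  liminf (fun n => ENNReal.ofReal (riemannSum φ g q n)) atTop

/-- For a continuous path this is the hitting time of `x` by `t ↦ ∫_0^t φ u (g u) du`
(`integralHitTime_eq_hitTime`), but it reads `g` only at countably many times, which makes it
measurable for the product σ-algebra. -/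
noncomputable def integralHitTime (x : ℝ) (g : ℝ≥0 → ℝ) : ℝ≥0∞ :=
  ⨅ (q : ℚ≥0) (_ : ENNReal.ofReal x ≤ liminfRiemannSum φ g q), ENNReal.ofReal q

variable {φ}

theorem measurable_integralHitTime (hφ : Measurable (Function.uncurry φ)) (x : ℝ) :
    Measurable (integralHitTime φ x) := by
  have hsum (q : ℝ≥0) (n : ℕ) : Measurable fun g => riemannSum φ g q n :=
    Finset.measurable_sum _ fun k _ =>
      (hφ.comp (measurable_const.prodMk (measurable_pi_apply _))).const_mul _
  have hliminf (q : ℝ≥0) : Measurable fun g => liminfRiemannSum φ g q :=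
    .liminf fun n => ENNReal.measurable_ofReal.comp (hsum q n)
  classical
  refine .iInf fun q => ?_
  simp_rw [iInf_eq_if]
  exact .ite (measurableSet_le measurable_const (hliminf q)) measurable_const measurable_const

theorem integralHitTime_eq_hitTime (hφ : Continuous (Function.uncurry φ)) (hφ0 : ∀ u y, 0 ≤ φ u y)
    {x : ℝ} (hx : 0 ≤ x) {Ω : Type*} {X : ℝ → Ω → ℝ} {ω : Ω} (hX : Continuous (X · ω)) :
    integralHitTime φ x (fun t : ℝ≥0 => X t ω) =
      hitTime (fun t ω => ∫ u in (0:ℝ)..t, φ u (X u ω)) x ω := by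
  have hh : Continuous fun u => φ u (X u ω) := hφ.comp (continuous_id.prodMk hX)
  have hliminf (q : ℝ≥0) : liminfRiemannSum φ (fun t : ℝ≥0 => X t ω) q =
      ENNReal.ofReal (∫ u in (0:ℝ)..q, φ u (X u ω)) := by
    refine ((ENNReal.continuous_ofReal.tendsto _).comp
      ((tendsto_riemannSum_integral hh q.2).congr fun n => ?_)).liminf_eq
    simp [riemannSum]
  rw [hitTime_eq_iInf_nnrat (f := fun t ω => ∫ u in (0:ℝ)..t, φ u (X u ω))
    (intervalIntegral.continuous_primitive (fun a b => hh.intervalIntegrable a b) 0)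
    (monotone_integral_of_nonneg (fun a b => hh.intervalIntegrable a b) (fun u => hφ0 _ _) 0)
    (by simpa using hx)]
  refine iInf_congr fun q => ?_
  rw [hliminf]
  exact iInf_congr_Prop (ENNReal.ofReal_le_ofReal_iff
    (intervalIntegral.integral_nonneg q.cast_nonneg fun u _ => hφ0 _ _)) fun _ => rfl

end IntegralHitTime

theorem map_hitTime_integral_eq_of_map_eq {Ω : Type*} [MeasurableSpace Ω] {P : Measure Ω}
    {φ : ℝ → ℝ → ℝ} (hφ : Continuous (Function.uncurry φ)) (hφ0 : ∀ u y, 0 ≤ φ u y)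
    {x : ℝ} (hx : 0 ≤ x) {X Y : ℝ → Ω → ℝ} (hXm : ∀ t, Measurable (X t))
    (hYm : ∀ t, Measurable (Y t)) (hXc : ∀ᵐ ω ∂P, Continuous (X · ω))
    (hYc : ∀ᵐ ω ∂P, Continuous (Y · ω))
    (hXY : P.map (fun ω (t : ℝ≥0) => X t ω) = P.map (fun ω (t : ℝ≥0) => Y t ω)) :
    P.map (hitTime (fun t ω => ∫ u in (0:ℝ)..t, φ u (X u ω)) x) =
      P.map (hitTime (fun t ω => ∫ u in (0:ℝ)..t, φ u (Y u ω)) x) := by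
  have hlaw {Z : ℝ → Ω → ℝ} (hZm : ∀ t, Measurable (Z t)) (hZc : ∀ᵐ ω ∂P, Continuous (Z · ω)) :
      P.map (hitTime (fun t ω => ∫ u in (0:ℝ)..t, φ u (Z u ω)) x) =
        (P.map fun ω (t : ℝ≥0) => Z t ω).map (integralHitTime φ x) := by
    rw [Measure.map_map (measurable_integralHitTime hφ.measurable x)
      (measurable_pi_lambda _ fun t => hZm t)]
    refine Measure.map_congr ?_
    filter_upwards [hZc] with ω hω
    exact (integralHitTime_eq_hitTime hφ hφ0 hx hω).symm
  rw [hlaw hXm hXc, hlaw hYm hYc, hXY]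

/-- For every `ν ∈ ℝ` and `x > 0`,
`τ^{(−ν)}_{x,0} = inf{t ≥ 0 : ∫_0^t exp(−2B_s + 2νs) ds = x}` has the same law as
`H^{(ν)}_x = inf{t ≥ 0 : ∫_0^t exp(2B_s + 2νs) ds = x}`. -/
theorem tau_eqDist_H
    {Ω : Type*} [MeasurableSpace Ω] (P : Measure Ω) [IsProbabilityMeasure P]
    (B : ℝ → Ω → ℝ) (hB : IsStandardBrownianMotion P B) (ν x : ℝ) (hx : 0 < x) :
    P.map (hitTime (fun t ω => ∫ u in (0:ℝ)..t, Real.exp (-(2 * B u ω) + 2 * ν * u)) x) =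
      P.map (hitTime (fun t ω => ∫ u in (0:ℝ)..t, Real.exp (2 * B u ω + 2 * ν * u)) x) := by
  have hφ : Continuous (Function.uncurry fun u y : ℝ => Real.exp (2 * y + 2 * ν * u)) := by
    fun_prop
  have hreflect : P.map (fun ω (t : ℝ≥0) => -B t ω) = P.map (fun ω (t : ℝ≥0) => B t ω) :=
    hB.isPreBrownianReal.map_neg
      (measurable_pi_lambda _ fun t : ℝ≥0 => hB.measurable t).aemeasurable
  simpa only [mul_neg] using map_hitTime_integral_eq_of_map_eq (X := fun t ω => -B t ω) hφ
    (fun _ _ => (Real.exp_pos _).le) hx.le (fun t => (hB.measurable t).neg) hB.measurable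
    (hB.cont.mono fun _ hω => hω.neg) hB.cont hreflect
end

section
/- For ν ∈ ℝ, y ∈ ℝ and t ≥ 0, the mean of the geometric Brownian motion with affine drift Y^{(ν)} started at y is E[Y^{(ν)}_t] = y·e^{2(ν+1)t} − (e^{2(ν+1)t} − 1)/(2(ν+1)) if ν ≠ −1, and E[Y^{(−1)}_t] = y − t if ν = −1. -/
open MeasureTheory ProbabilityTheory Real Filter Set
open scoped ENNReal NNReal

/-! Pathwise, `Y_t = y e^{2B_t + 2νt} - ∫_0^t e^{2(B_t - B_s) + 2ν(t-s)} ds`. Every exponential here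
is an exponential moment of a Gaussian increment, `E e^{2(B_t - B_s)} = e^{2(t-s)}`, and the
integrand is nonnegative and jointly measurable (the paths are a.s. continuous), so Fubini gives
`E Y_t = y e^{at} - ∫_0^t e^{a(t-s)} ds` with `a = 2(ν+1)`. -/

theorem aemeasurable_uncurry_of_ae_continuous {ι Ω E : Type*} [TopologicalSpace ι]
    [TopologicalSpace.MetrizableSpace ι] [MeasurableSpace ι] [SecondCountableTopology ι]
    [OpensMeasurableSpace ι] [MeasurableSpace Ω] [TopologicalSpace E]
    [TopologicalSpace.PseudoMetrizableSpace E] [MeasurableSpace E] [BorelSpace E] [Zero E] {μ : Measure ι} {P : Measure Ω} [SFinite P] {u : ι → Ω → E}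
    (hu : ∀ i, Measurable (u i)) (hcont : ∀ᵐ ω ∂P, Continuous fun i => u i ω) :
    AEMeasurable (Function.uncurry u) (μ.prod P) := by
  set N := toMeasurable P {ω | ¬ Continuous fun i => u i ω}
  -- Killing the paths on the null set `N` makes every path continuous.
  set v : ι → Ω → E := fun i => Nᶜ.indicator (u i)
  have hv : Measurable (Function.uncurry v) := by
    refine measurable_uncurry_of_continuous_of_measurable (fun ω => ?_)
      fun i => (hu i).indicator (measurableSet_toMeasurable P _).compl
    by_cases hω : ω ∈ N
    · simp only [v, indicator_of_notMem (notMem_compl_iff.mpr hω)]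
      exact continuous_const
    · simp only [v, indicator_of_mem (mem_compl hω)]
      exact not_not.mp fun h => hω (subset_toMeasurable P _ h)
  have hN : ∀ᵐ ω ∂P, ω ∉ N := by
    rw [← measure_eq_zero_iff_ae_notMem, measure_toMeasurable]
    exact ae_iff.mp hcont
  refine ⟨Function.uncurry v, hv, ?_⟩
  filter_upwards [Measure.quasiMeasurePreserving_snd.ae hN] with p hp
  exact (indicator_of_mem (mem_compl hp) _).symm

theorem integrable_uncurry_of_nonneg {α Ω : Type*} [MeasurableSpace α] [MeasurableSpace Ω]
    {μ : Measure α} {P : Measure Ω} [SFinite P] {F : α → Ω → ℝ} {g : α → ℝ}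
    (hF : AEStronglyMeasurable (Function.uncurry F) (μ.prod P)) (hF_nonneg : ∀ s ω, 0 ≤ F s ω)
    (hF_int : ∀ᵐ s ∂μ, Integrable (F s) P) (hF_integral : ∀ᵐ s ∂μ, ∫ ω, F s ω ∂P = g s)
    (hg : Integrable g μ) : Integrable (Function.uncurry F) (μ.prod P) := by
  refine (integrable_prod_iff hF).mpr ⟨hF_int, hg.congr ?_⟩
  filter_upwards [hF_integral] with s hs
  simp only [Function.uncurry_apply_pair, Real.norm_of_nonneg (hF_nonneg s _), hs]

theorem integrable_exp_mul_of_map_eq_gaussianReal {Ω : Type*} [MeasurableSpace Ω]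
    {P : Measure Ω} {X : Ω → ℝ} {m : ℝ} {v : ℝ≥0} (hX : P.map X = gaussianReal m v) (c : ℝ) :
    Integrable (fun ω => Real.exp (c * X ω)) P := by
  have : NeZero P := ⟨fun hP => by simpa [hP] using congrArg (· univ) hX⟩
  exact mgf_pos_iff.mp (by rw [mgf_gaussianReal hX]; positivity)

namespace IsStandardBrownianMotion

variable {Ω : Type*} [MeasurableSpace Ω] {P : Measure Ω} {B : ℝ → Ω → ℝ}

theorem integrable_exp_mul_sub (hB : IsStandardBrownianMotion P B) (c : ℝ) {s t : ℝ}
    (hs : 0 ≤ s) (hst : s ≤ t) : Integrable (fun ω => Real.exp (c * (B t ω - B s ω))) P :=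
  integrable_exp_mul_of_map_eq_gaussianReal (hB.gauss_incr s t hs hst) c

theorem integral_exp_mul_sub (hB : IsStandardBrownianMotion P B) (c : ℝ) {s t : ℝ}
    (hs : 0 ≤ s) (hst : s ≤ t) :
    ∫ ω, Real.exp (c * (B t ω - B s ω)) ∂P = Real.exp (c ^ 2 * (t - s) / 2) := by
  rw [← mgf, mgf_gaussianReal (hB.gauss_incr s t hs hst), Real.coe_toNNReal _ (by linarith)]
  ring_nf

theorem integrable_exp_mul (hB : IsStandardBrownianMotion P B) (c : ℝ) {t : ℝ} (ht : 0 ≤ t) :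
    Integrable (fun ω => Real.exp (c * B t ω)) P :=
  (hB.integrable_exp_mul_sub c le_rfl ht).congr <| by
    filter_upwards [hB.init] with ω h0 using by rw [h0, sub_zero]

theorem integral_exp_mul (hB : IsStandardBrownianMotion P B) (c : ℝ) {t : ℝ} (ht : 0 ≤ t) :
    ∫ ω, Real.exp (c * B t ω) ∂P = Real.exp (c ^ 2 * t / 2) := by
  rw [← sub_zero t, ← hB.integral_exp_mul_sub c le_rfl ht, sub_zero]
  refine integral_congr_ae ?_
  filter_upwards [hB.init] with ω h0 using by rw [h0, sub_zero]

theorem aemeasurable_uncurry [SFinite P] (hB : IsStandardBrownianMotion P B) (μ : Measure ℝ) :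
    AEMeasurable (Function.uncurry B) (μ.prod P) :=
  aemeasurable_uncurry_of_ae_continuous hB.measurable hB.cont

end IsStandardBrownianMotion

theorem procY_eq {Ω : Type*} (B : ℝ → Ω → ℝ) (ν y t : ℝ) (ω : Ω) :
    procY B ν y t ω = y * Real.exp (2 * ν * t) * Real.exp (2 * B t ω) -
      ∫ s in (0:ℝ)..t, Real.exp (2 * ν * (t - s)) * Real.exp (2 * (B t ω - B s ω)) := by
  simp only [procY, mul_sub, mul_assoc, ← intervalIntegral.integral_const_mul, ← Real.exp_add]
  ring_nf

theorem integral_exp_mul_sub_left (a t : ℝ) :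
    ∫ s in (0:ℝ)..t, Real.exp (a * (t - s)) = if a = 0 then t else (Real.exp (a * t) - 1) / a := by
  split_ifs with ha
  · simp [ha]
  · rw [intervalIntegral.integral_comp_sub_left (fun x => Real.exp (a * x)),
      intervalIntegral.integral_comp_mul_left (fun x => Real.exp x) ha, integral_exp]
    simp [div_eq_inv_mul]

theorem IsStandardBrownianMotion.integral_procY {Ω : Type*} [MeasurableSpace Ω] {P : Measure Ω}
    [SFinite P] {B : ℝ → Ω → ℝ} (hB : IsStandardBrownianMotion P B) (ν y : ℝ)
    {t : ℝ} (ht : 0 ≤ t) :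
    ∫ ω, procY B ν y t ω ∂P =
      y * Real.exp (2 * (ν + 1) * t) - ∫ s in (0:ℝ)..t, Real.exp (2 * (ν + 1) * (t - s)) := by
  set F : ℝ → Ω → ℝ := fun s ω => Real.exp (2 * ν * (t - s)) * Real.exp (2 * (B t ω - B s ω))
  have hF_int : ∀ s ∈ Ioc 0 t, Integrable (F s) P := fun s hs =>
    (hB.integrable_exp_mul_sub 2 hs.1.le hs.2).const_mul _
  have hF_integral : ∀ s ∈ Ioc 0 t, ∫ ω, F s ω ∂P = Real.exp (2 * (ν + 1) * (t - s)) := by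
    intro s hs
    rw [integral_const_mul, hB.integral_exp_mul_sub 2 hs.1.le hs.2, ← Real.exp_add]
    ring_nf
  have hF_meas :
      AEStronglyMeasurable (Function.uncurry F) ((volume.restrict (Ioc 0 t)).prod P) := by
    have hBs := hB.aemeasurable_uncurry (volume.restrict (Ioc 0 t))
    have hBt : Measurable fun p : ℝ × Ω => B t p.2 := (hB.measurable t).comp measurable_snd
    refine (AEMeasurable.mul (by fun_prop) ?_).aestronglyMeasurable
    exact Real.measurable_exp.comp_aemeasurable ((hBt.aemeasurable.sub hBs).const_mul 2)
  have hF_prod : Integrable (Function.uncurry F) ((volume.restrict (Ioc 0 t)).prod P) :=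
    integrable_uncurry_of_nonneg hF_meas (fun _ _ => by positivity)
      (ae_restrict_of_forall_mem measurableSet_Ioc hF_int)
      (ae_restrict_of_forall_mem measurableSet_Ioc hF_integral)
      (by fun_prop : Continuous fun s => Real.exp (2 * (ν + 1) * (t - s))).integrableOn_Ioc
  have hF_swap : ∫ ω, (∫ s in (0:ℝ)..t, F s ω) ∂P = ∫ s in (0:ℝ)..t, ∫ ω, F s ω ∂P :=
    (intervalIntegral_integral_swap (by rwa [uIoc_of_le ht])).symm
  have h_second : Integrable (fun ω => ∫ s in (0:ℝ)..t, F s ω) P := by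
    simpa only [intervalIntegral.integral_of_le ht, Function.uncurry_apply_pair]
      using hF_prod.integral_prod_right
  simp_rw [procY_eq]
  rw [integral_sub ((hB.integrable_exp_mul 2 ht).const_mul _) h_second, hF_swap,
    integral_const_mul, hB.integral_exp_mul 2 ht, intervalIntegral.integral_congr_ae
      (ae_of_all _ fun s hs => hF_integral s (by rwa [uIoc_of_le ht] at hs)), mul_assoc,
    ← Real.exp_add]
  ring_nf

/-- mean of the geometric Brownian motion with affine drift `Y^{(ν)}`. -/
theorem mean_procY
    {Ω : Type*} [MeasurableSpace Ω] (P : Measure Ω) [IsProbabilityMeasure P]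
    (B : ℝ → Ω → ℝ) (hB : IsStandardBrownianMotion P B)
    (ν y t : ℝ) (ht : 0 ≤ t) :
    (ν ≠ -1 → (∫ ω, procY B ν y t ω ∂P) =
        y * Real.exp (2 * (ν + 1) * t) -
          (Real.exp (2 * (ν + 1) * t) - 1) / (2 * (ν + 1))) ∧
    (ν = -1 → (∫ ω, procY B ν y t ω ∂P) = y - t) := by
  rw [hB.integral_procY ν y ht, integral_exp_mul_sub_left]
  refine ⟨fun hν => ?_, fun hν => ?_⟩
  · rw [if_neg (by contrapose! hν; linarith)]
  · subst hν
    norm_num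
end

section
/- For ν ∈ ℝ, y > 0 and r* > 2(ν+1), the expectation E[∫_0^{τ^{(ν)}_{y,0}} e^{−r* s} Y^{(ν)}_s ds] is at most y/(r* − 2(ν+1)); in particular, E[Y^{(ν)}_t · 1{Y^{(ν)}_t > 0}] ≤ y·e^{2(ν+1)t} for every t ≥ 0. -/
open MeasureTheory ProbabilityTheory Real Filter Set
open scoped ENNReal NNReal

/-! Since the time integral in `procY` is nonnegative, `Y_t ≤ y exp (2 B^{(ν)}_t)` for `t ≥ 0`,
and the Gaussian moment `E[exp (2 B_t)] = e^{2t}` gives `E[y exp (2 B^{(ν)}_t)] = y e^{2(ν+1)t}`.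
This is the second bound. For the first, enlarge the random domain `[0, τ)` to `[0, ∞)`, swap
expectation and time integral (Tonelli; joint measurability comes from the a.s. continuity of
the paths), and integrate `y e^{-(r* - 2(ν+1)) s}` over `[0, ∞)`. -/

lemma aemeasurable_uncurry_swap_of_ae_continuous {Ω ι : Type*} [MeasurableSpace Ω]
    [TopologicalSpace ι] [TopologicalSpace.MetrizableSpace ι] [SecondCountableTopology ι]
    [MeasurableSpace ι] [OpensMeasurableSpace ι] {P : Measure Ω} {μ : Measure ι} {X : ι → Ω → ℝ}
    (hmeas : ∀ i, Measurable (X i)) (hcont : ∀ᵐ ω ∂P, Continuous fun i => X i ω) :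
    AEMeasurable (fun p : Ω × ι => X p.2 p.1) (P.prod μ) := by
  obtain ⟨N, hN_sub, hN_meas, hN_null⟩ := exists_measurable_superset_of_null (ae_iff.mp hcont)
  set X' : ι → Ω → ℝ := fun i => Nᶜ.indicator (X i)
  have hX'_cont : ∀ ω, Continuous fun i => X' i ω := by
    intro ω
    by_cases hω : ω ∈ N
    · simpa [X', hω] using continuous_const
    · simpa [X', hω] using not_not.mp fun h => hω (hN_sub h)
  have hX'_meas : Measurable (Function.uncurry X') :=
    measurable_uncurry_of_continuous_of_measurable hX'_cont
      fun i => (hmeas i).indicator hN_meas.compl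
  refine ⟨fun p => X' p.2 p.1, hX'_meas.comp measurable_swap, ?_⟩
  have hN_ae : ∀ᵐ ω ∂P, ω ∉ N := measure_eq_zero_iff_ae_notMem.mp hN_null
  filter_upwards [Measure.quasiMeasurePreserving_fst.ae hN_ae] with p hp
  simp [X', hp]

lemma lintegral_ofReal_exp_mul_gaussianReal (m : ℝ) (v : ℝ≥0) (c : ℝ) :
    ∫⁻ x, ENNReal.ofReal (exp (c * x)) ∂gaussianReal m v =
      ENNReal.ofReal (exp (m * c + v * c ^ 2 / 2)) := by
  rw [← ofReal_integral_eq_lintegral_ofReal (integrable_exp_mul_gaussianReal c)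
    (ae_of_all _ fun x => (exp_pos _).le), ← mgf_gaussianReal (X := id) Measure.map_id c, mgf]
  rfl

namespace IsStandardBrownianMotion

variable {Ω : Type*} [MeasurableSpace Ω] {P : Measure Ω} {B : ℝ → Ω → ℝ}

lemma lintegral_ofReal_exp_mul (hB : IsStandardBrownianMotion P B) (c : ℝ) {t : ℝ}
    (ht : 0 ≤ t) :
    ∫⁻ ω, ENNReal.ofReal (exp (c * B t ω)) ∂P = ENNReal.ofReal (exp (t * c ^ 2 / 2)) := by
  calc ∫⁻ ω, ENNReal.ofReal (exp (c * B t ω)) ∂P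
      = ∫⁻ ω, ENNReal.ofReal (exp (c * (B t ω - B 0 ω))) ∂P := by
        refine lintegral_congr_ae ?_
        filter_upwards [hB.init] with ω h0
        rw [h0, sub_zero]
    _ = ∫⁻ x, ENNReal.ofReal (exp (c * x)) ∂P.map (fun ω => B t ω - B 0 ω) :=
        (lintegral_map (f := fun x => ENNReal.ofReal (exp (c * x))) (by fun_prop)
          ((hB.measurable t).sub (hB.measurable 0))).symm
    _ = ENNReal.ofReal (exp (t * c ^ 2 / 2)) := by
        rw [hB.gauss_incr 0 t le_rfl ht, lintegral_ofReal_exp_mul_gaussianReal, sub_zero,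
          Real.coe_toNNReal _ ht, zero_mul, zero_add]

lemma lintegral_ofReal_mul_exp_two_mul_drift (hB : IsStandardBrownianMotion P B) (ν : ℝ)
    {c t : ℝ} (hc : 0 ≤ c) (ht : 0 ≤ t) :
    ∫⁻ ω, ENNReal.ofReal (c * exp (2 * (B t ω + ν * t))) ∂P =
      ENNReal.ofReal (c * exp (2 * (ν + 1) * t)) := by
  have h_split : ∀ ω, c * exp (2 * (B t ω + ν * t)) = c * exp (2 * ν * t) * exp (2 * B t ω) :=
    fun ω => by rw [mul_assoc, ← exp_add]; ring_nf
  simp_rw [h_split, ENNReal.ofReal_mul (by positivity : 0 ≤ c * exp (2 * ν * t))]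
  rw [lintegral_const_mul' _ _ ENNReal.ofReal_ne_top, hB.lintegral_ofReal_exp_mul 2 ht,
    ← ENNReal.ofReal_mul (by positivity), mul_assoc, ← exp_add]
  ring_nf

end IsStandardBrownianMotion

lemma procY_le {Ω : Type*} (B : ℝ → Ω → ℝ) (ν y : ℝ) {t : ℝ} (ht : 0 ≤ t) (ω : Ω) :
    procY B ν y t ω ≤ y * exp (2 * (B t ω + ν * t)) := by
  have h_int : 0 ≤ ∫ s in (0:ℝ)..t, exp (-(2 * (B s ω + ν * s))) :=
    intervalIntegral.integral_nonneg ht fun _ _ => (exp_pos _).le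
  rw [procY, mul_comm y]
  exact mul_le_mul_of_nonneg_left (by linarith) (exp_pos _).le

lemma lintegral_Ici_ofReal_mul_exp_neg_mul {c a : ℝ} (hc : 0 ≤ c) (ha : 0 < a) :
    ∫⁻ s in Ici 0, ENNReal.ofReal (c * exp (-a * s)) = ENNReal.ofReal (c / a) := by
  have h_int : IntegrableOn (fun s => c * exp (-a * s)) (Ioi 0) :=
    (integrableOn_exp_mul_Ioi (neg_lt_zero.mpr ha) 0).const_mul c
  rw [← setLIntegral_congr Ioi_ae_eq_Ici, ← ofReal_integral_eq_lintegral_ofReal h_int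
    (ae_of_all _ fun s => by positivity), integral_const_mul,
    integral_exp_mul_Ioi (neg_lt_zero.mpr ha), mul_zero, exp_zero, neg_div_neg_eq, mul_one_div]

/-- the bound `E[∫_0^{τ_{y,0}} e^{−r*s} Y_s ds] ≤ y/(r* − 2(ν+1))` for
`r* > 2(ν+1)`, and `E[Y_t 1{Y_t > 0}] ≤ y e^{2(ν+1)t}` for all `t ≥ 0`. -/
theorem discounted_procY_bound
    {Ω : Type*} [MeasurableSpace Ω] (P : Measure Ω) [IsProbabilityMeasure P]
    (B : ℝ → Ω → ℝ) (hB : IsStandardBrownianMotion P B)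
    (ν y rs : ℝ) (hy : 0 < y) (hrs : 2 * (ν + 1) < rs) :
    (∫⁻ ω, (∫⁻ s in {s : ℝ | 0 ≤ s ∧ ENNReal.ofReal s < hitTime (procY B ν y) 0 ω},
        ENNReal.ofReal (Real.exp (-rs * s) * procY B ν y s ω)) ∂P) ≤
      ENNReal.ofReal (y / (rs - 2 * (ν + 1))) ∧
    ∀ t : ℝ, 0 ≤ t →
      (∫⁻ ω, (if 0 < procY B ν y t ω then ENNReal.ofReal (procY B ν y t ω) else 0) ∂P) ≤
        ENNReal.ofReal (y * Real.exp (2 * (ν + 1) * t)) := by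
  set F : Ω → ℝ → ℝ≥0∞ := fun ω s =>
    ENNReal.ofReal (y * exp (-rs * s) * exp (2 * (B s ω + ν * s)))
  have hF_meas : AEMeasurable (Function.uncurry F) (P.prod (volume.restrict (Ici 0))) := by
    have hX := aemeasurable_uncurry_swap_of_ae_continuous
      (μ := volume.restrict (Ici (0 : ℝ))) hB.measurable hB.cont
    have h_drift : Measurable fun p : Ω × ℝ => ν * p.2 := by fun_prop
    have h_discount : Measurable fun p : Ω × ℝ => y * exp (-rs * p.2) := by fun_prop
    exact ENNReal.measurable_ofReal.comp_aemeasurable (h_discount.aemeasurable.mul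
      (measurable_exp.comp_aemeasurable ((hX.add h_drift.aemeasurable).const_mul 2)))
  have hF_mean : ∀ s ∈ Ici (0 : ℝ),
      ∫⁻ ω, F ω s ∂P = ENNReal.ofReal (y * exp (-(rs - 2 * (ν + 1)) * s)) := by
    intro s hs
    rw [hB.lintegral_ofReal_mul_exp_two_mul_drift ν (by positivity) hs, mul_assoc, ← exp_add]
    ring_nf
  refine ⟨?_, fun t ht => ?_⟩
  · calc _ ≤ ∫⁻ ω, (∫⁻ s in Ici 0, F ω s) ∂P := by
          refine lintegral_mono fun ω => (lintegral_mono_set fun s hs => hs.1).trans ?_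
          refine setLIntegral_mono' measurableSet_Ici fun s hs => ENNReal.ofReal_le_ofReal ?_
          rw [mul_comm y, mul_assoc]
          exact mul_le_mul_of_nonneg_left (procY_le B ν y hs ω) (exp_pos _).le
      _ = ∫⁻ s in Ici 0, ∫⁻ ω, F ω s ∂P := lintegral_lintegral_swap hF_meas
      _ = ENNReal.ofReal (y / (rs - 2 * (ν + 1))) := by
          rw [setLIntegral_congr_fun measurableSet_Ici hF_mean,
            lintegral_Ici_ofReal_mul_exp_neg_mul hy.le (by linarith)]
  · calc _ ≤ ∫⁻ ω, ENNReal.ofReal (y * exp (2 * (B t ω + ν * t))) ∂P := by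
          refine lintegral_mono fun ω => ?_
          split_ifs
          · exact ENNReal.ofReal_le_ofReal (procY_le B ν y ht ω)
          · exact zero_le
      _ = ENNReal.ofReal (y * exp (2 * (ν + 1) * t)) :=
          hB.lintegral_ofReal_mul_exp_two_mul_drift ν hy.le ht
end
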